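/- arXiv:math/9408211 — 3 statements merged into one kernel-verified Lean document; each statement's English description precedes it below -/
import Mathlib

section
/- Projection formula for Laguerre polynomials: for −1 < β < α and every x ≥ 0 and every n ∈ ℕ, e^{−x} L_n^β(x) = (1/Γ(α−β)) ∫_x^∞ (y−x)^{α−β−1} e^{−y} L_n^α(y) dy. -/
open Finset MeasureTheory

/-- The generalized Laguerre polynomial `L_n^α(x) = ∑_{j=0}^n binom(n+α, n−j) (−x)^j / j!`. -/
noncomputable def laguerre (α : ℝ) (n : ℕ) (x : ℝ) : ℝ :=
  ∑ j ∈ Finset.range (n + 1),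
    Real.Gamma ((n : ℝ) + α + 1) /
      (Real.Gamma (α + (j : ℝ) + 1) * ((n - j).factorial : ℝ)) * (-x) ^ j / (j.factorial : ℝ)

/-!
With `s = α - β`, the substitution `y = x + t` turns the right-hand side into `exp (-x)` times the
Gamma moments `∫ t^(s-1+k) e^(-t) dt = Γ(s+k)` of the Taylor expansion of `L_n^α` at `x`.
Comparing coefficients of `x^m` leaves, with `N = n - m`, `a = s` and `c = β + m + 1`, the identity
`∑_k (-1)^k C(N,k) Γ(a+k)/Γ(a+k+c) = Γ(a) Γ(c+N) / (Γ(a+c+N) Γ(c))`. Its left side is, up to the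
sign `(-1)^N`, the `N`-th forward difference of `a ↦ Γ(a)/Γ(a+c)`, and one difference step sends
`Γ(a)/Γ(a+c)` to `-c Γ(a)/Γ(a+c+1)`.
-/

open Set Real Nat fwdDiff

lemma setIntegral_Ioi_eq_setIntegral_Ioi_zero_comp_add {E : Type*} [NormedAddCommGroup E]
    [NormedSpace ℝ E] (f : ℝ → E) (x : ℝ) :
    ∫ y in Ioi x, f y = ∫ t in Ioi 0, f (t + x) := by
  have hpre : (· + x) ⁻¹' Ioi x = Ioi (0 : ℝ) := by ext t; simp
  rw [← (measurePreserving_add_right volume x).setIntegral_preimage_emb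
    (MeasurableEquiv.addRight x).measurableEmbedding, hpre]

namespace Real

lemma fwdDiff_Gamma_div_Gamma_add {a c : ℝ} (ha : 0 < a) (hc : 0 < c) :
    Δ_[1] (fun b => Gamma b / Gamma (b + c)) a = -c * (Gamma a / Gamma (a + c + 1)) := by
  have hac : 0 < a + c := by linarith
  simp only [fwdDiff, add_right_comm a 1 c, Gamma_add_one ha.ne', Gamma_add_one hac.ne']
  have := (Gamma_pos_of_pos hac).ne'
  field_simp
  ring

lemma fwdDiff_iter_Gamma_div_Gamma_add {c : ℝ} (hc : 0 < c) (N : ℕ) {a : ℝ} (ha : 0 < a) :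
    (Δ_[1])^[N] (fun b => Gamma b / Gamma (b + c)) a
      = (-1) ^ N * (Gamma (c + N) / Gamma c) * (Gamma a / Gamma (a + c + N)) := by
  induction N generalizing a with
  | zero =>
    have := (Gamma_pos_of_pos hc).ne'
    simp [div_self this]
  | succ N ih =>
    have hcN : 0 < c + N := by positivity
    have step : Gamma (a + 1) / Gamma (a + 1 + c + N) - Gamma a / Gamma (a + c + N)
        = -(c + N) * (Gamma a / Gamma (a + c + N + 1)) := by
      simpa only [fwdDiff, add_assoc] using fwdDiff_Gamma_div_Gamma_add ha hcN
    rw [Function.iterate_succ_apply', fwdDiff, ih ha, ih (by linarith), ← mul_sub, step]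
    push_cast
    rw [← add_assoc c, Gamma_add_one hcN.ne', ← add_assoc]
    ring

lemma sum_neg_one_pow_mul_choose_mul_Gamma_div {a c : ℝ} (ha : 0 < a) (hc : 0 < c) (N : ℕ) :
    ∑ k ∈ range (N + 1), (-1) ^ k * (N.choose k : ℝ) * (Gamma (a + k) / Gamma (a + k + c))
      = Gamma a * Gamma (c + N) / (Gamma (a + c + N) * Gamma c) := by
  have h := fwdDiff_iter_Gamma_div_Gamma_add hc N ha
  rw [fwdDiff_iter_eq_sum_shift] at h
  simp only [zsmul_eq_mul, nsmul_eq_mul, mul_one, Int.cast_mul, Int.cast_pow, Int.cast_neg,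
    Int.cast_one, Int.cast_natCast] at h
  have hsign : ∀ k ∈ range (N + 1), (-1 : ℝ) ^ k = (-1) ^ N * (-1) ^ (N - k) := fun k hk => by
    rw [← pow_add, show N + (N - k) = k + 2 * (N - k) by grind, pow_add, pow_mul, neg_one_sq,
      one_pow, mul_one]
  have := (Gamma_pos_of_pos hc).ne'
  calc _ = (-1) ^ N * ∑ k ∈ range (N + 1),
        (-1) ^ (N - k) * (N.choose k : ℝ) * (Gamma (a + k) / Gamma (a + k + c)) := by
        rw [mul_sum]
        exact sum_congr rfl fun k hk => by rw [hsign k hk]; ring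
    _ = _ := by
        rw [h, ← mul_assoc, ← mul_assoc, ← mul_pow, neg_one_mul, neg_neg, one_pow]
        field_simp

lemma rpow_mul_exp_neg_mul_pow_eqOn (s : ℝ) (k : ℕ) :
    EqOn (fun t => t ^ (s - 1) * exp (-t) * t ^ k) (fun t => exp (-t) * t ^ (s + k - 1))
      (Ioi 0) := fun t (ht : 0 < t) => by
  dsimp only
  rw [add_sub_right_comm, rpow_add ht, rpow_natCast]
  ring

lemma integrableOn_rpow_mul_exp_neg_mul_pow {s : ℝ} (hs : 0 < s) (k : ℕ) :
    IntegrableOn (fun t => t ^ (s - 1) * exp (-t) * t ^ k) (Ioi 0) :=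
  (GammaIntegral_convergent (by positivity)).congr_fun
    (rpow_mul_exp_neg_mul_pow_eqOn s k).symm measurableSet_Ioi

lemma integral_rpow_mul_exp_neg_mul_pow {s : ℝ} (hs : 0 < s) (k : ℕ) :
    ∫ t in Ioi 0, t ^ (s - 1) * exp (-t) * t ^ k = Gamma (s + k) := by
  rw [Gamma_eq_integral (by positivity),
    setIntegral_congr_fun measurableSet_Ioi (rpow_mul_exp_neg_mul_pow_eqOn s k)]

lemma integral_rpow_mul_exp_neg_mul_sum {ι : Type*} (S : Finset ι) (b : ι → ℝ) (e : ι → ℕ)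
    {s : ℝ} (hs : 0 < s) :
    ∫ t in Ioi 0, t ^ (s - 1) * exp (-t) * ∑ i ∈ S, b i * t ^ e i
      = ∑ i ∈ S, b i * Gamma (s + e i) := by
  have hterm : ∀ i ∈ S, IntegrableOn (fun t => b i * (t ^ (s - 1) * exp (-t) * t ^ e i)) (Ioi 0) :=
    fun i _ => (integrableOn_rpow_mul_exp_neg_mul_pow hs (e i)).const_mul (b i)
  calc _ = ∫ t in Ioi 0, ∑ i ∈ S, b i * (t ^ (s - 1) * exp (-t) * t ^ e i) := by
        simp_rw [mul_sum, mul_left_comm _ (b _)]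
    _ = _ := by
        rw [integral_finsetSum S hterm]
        simp_rw [integral_const_mul, integral_rpow_mul_exp_neg_mul_pow hs]

end Real

noncomputable def laguerreCoeff (α : ℝ) (n j : ℕ) : ℝ :=
  Gamma (n + α + 1) / (Gamma (α + j + 1) * (n - j)!) * (-1) ^ j / j !

lemma laguerre_eq_sum_laguerreCoeff (α : ℝ) (n : ℕ) (x : ℝ) :
    laguerre α n x = ∑ j ∈ range (n + 1), laguerreCoeff α n j * x ^ j := by
  refine sum_congr rfl fun j _ => ?_
  rw [laguerreCoeff, neg_pow]
  ring

lemma laguerre_add_eq_sum (α : ℝ) (n : ℕ) (x t : ℝ) :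
    laguerre α n (x + t) = ∑ m ∈ range (n + 1), ∑ k ∈ range (n + 1 - m),
      laguerreCoeff α n (m + k) * (m + k).choose m * x ^ m * t ^ k := by
  rw [laguerre_eq_sum_laguerreCoeff, ← sum_range_diag_flip]
  refine sum_congr rfl fun j _ => ?_
  rw [add_pow, mul_sum]
  refine sum_congr rfl fun m hm => ?_
  rw [Nat.add_sub_cancel' (mem_range_succ_iff.mp hm)]
  ring

lemma integral_Ioi_sub_rpow_mul_exp_neg_mul_laguerre {s : ℝ} (hs : 0 < s) (α x : ℝ) (n : ℕ) :
    ∫ y in Ioi x, (y - x) ^ (s - 1) * exp (-y) * laguerre α n y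
      = exp (-x) * ∑ m ∈ range (n + 1), (∑ k ∈ range (n + 1 - m),
          laguerreCoeff α n (m + k) * (m + k).choose m * Gamma (s + k)) * x ^ m := by
  have hshift : ∀ t, (t + x - x) ^ (s - 1) * exp (-(t + x)) * laguerre α n (t + x)
      = exp (-x) * (t ^ (s - 1) * exp (-t) *
        ∑ p ∈ (range (n + 1)).sigma (fun m => range (n + 1 - m)),
          (laguerreCoeff α n (p.1 + p.2) * (p.1 + p.2).choose p.1 * x ^ p.1) * t ^ p.2) := by
    intro t
    rw [add_sub_cancel_right, neg_add, exp_add, add_comm t, laguerre_add_eq_sum, sum_sigma']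
    ring
  rw [setIntegral_Ioi_eq_setIntegral_Ioi_zero_comp_add, funext hshift, integral_const_mul,
    integral_rpow_mul_exp_neg_mul_sum _ _ _ hs, sum_sigma]
  simp_rw [sum_mul, mul_right_comm _ (x ^ _)]

lemma sum_laguerreCoeff_mul_choose_mul_Gamma {α β : ℝ} (hβ : -1 < β) (hβα : β < α) {m n : ℕ}
    (hmn : m ≤ n) :
    ∑ k ∈ range (n + 1 - m), laguerreCoeff α n (m + k) * (m + k).choose m * Gamma (α - β + k)
      = Gamma (α - β) * laguerreCoeff β n m := by
  obtain ⟨N, rfl⟩ := Nat.exists_eq_add_of_le hmn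
  have ha : 0 < α - β := by linarith
  have hc : 0 < β + m + 1 := by have := m.cast_nonneg (α := ℝ); linarith
  have hterm : ∀ k ∈ range (N + 1), laguerreCoeff α (m + N) (m + k) * (m + k).choose m
        * Gamma (α - β + k)
      = Gamma (m + N + α + 1) * (-1) ^ m / (m ! * N !) *
        ((-1) ^ k * N.choose k * (Gamma (α - β + k) / Gamma (α - β + k + (β + m + 1)))) := by
    intro k hk
    have hkN := mem_range_succ_iff.mp hk
    rw [laguerreCoeff, Nat.add_sub_add_left, cast_add_choose, cast_choose ℝ hkN, pow_add,
      show α + (m + k : ℕ) + 1 = α - β + k + (β + m + 1) by push_cast; ring]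
    push_cast
    field_simp
  rw [show m + N + 1 - m = N + 1 by omega, sum_congr rfl hterm, ← mul_sum,
    sum_neg_one_pow_mul_choose_mul_Gamma_div ha hc, laguerreCoeff, Nat.add_sub_cancel_left]
  push_cast
  rw [show α - β + (β + m + 1) + N = m + N + α + 1 by ring,
    show β + m + 1 + N = m + N + β + 1 by ring]
  have := (Gamma_pos_of_pos (show 0 < (m : ℝ) + N + α + 1 by
    have := N.cast_nonneg (α := ℝ); linarith)).ne'
  field_simp

theorem laguerre_projection_general (α β : ℝ) (hβ : -1 < β) (hβα : β < α) (x : ℝ)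
    (n : ℕ) :
    Real.exp (-x) * laguerre β n x =
      (1 / Real.Gamma (α - β)) *
        ∫ y in Set.Ioi x, (y - x) ^ (α - β - 1) * Real.exp (-y) * laguerre α n y := by
  have hs : 0 < α - β := by linarith
  rw [integral_Ioi_sub_rpow_mul_exp_neg_mul_laguerre hs, laguerre_eq_sum_laguerreCoeff, mul_sum,
    mul_sum, mul_sum]
  refine sum_congr rfl fun m hm => ?_
  rw [sum_laguerreCoeff_mul_choose_mul_Gamma hβ hβα (mem_range_succ_iff.mp hm)]
  have := (Gamma_pos_of_pos hs).ne'
  field_simp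

theorem laguerre_projection (α β : ℝ) (hβ : -1 < β) (hβα : β < α) (x : ℝ) (hx : 0 ≤ x)
    (n : ℕ) :
    Real.exp (-x) * laguerre β n x =
      (1 / Real.Gamma (α - β)) *
        ∫ y in Set.Ioi x, (y - x) ^ (α - β - 1) * Real.exp (-y) * laguerre α n y :=
  laguerre_projection_general α β hβ hβα x n
end

section
/- Weighted ℓ² Hardy-type step estimate: let α > 0 and A_k^{α+1} = binom(k+α+1, k). For any complex sequence (m_k) set ‖m‖ := sup_k |m_k| + sup_N (∑_{k=N}^{2N} |(k+1)Δm_k|²/(k+1))^{1/2} with Δm_k = m_k − m_{k+1}. Then there is a constant C (depending only on α) such that for every N ∈ ℕ, (∑_{k=0}^N A_k^{α+1}|Δm_k|²)·(∑_{k=N}^∞ (A_k^{α+1})^{−1}) ≤ C‖m‖². -/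
/-!
Put `B_k = A_k^α`, so that `A_k^{α+1} = B_k (k+α+1)/(α+1)`. The reciprocals telescope,
`1/A_k^{α+1} = (α+1)/α · (1/B_k − 1/B_{k+1})`, so the tail `∑_{k ≥ N} 1/A_k^{α+1}` is at most
`(α+1)/(α B_N)`. On the other side `A_k^{α+1} ≤ B_N (k+1)` for `k ≤ N`, so the block `N/2 < k ≤ N`
of `∑ A_k^{α+1} |Δm_k|²` is at most `B_N M²` by the dyadic hypothesis, while the growth
`B_N ≥ (1 + α/2) B_{N/2}` lets an induction on `N` absorb the earlier blocks:
`∑_{k ≤ N} A_k^{α+1} |Δm_k|² ≤ (α+2)/α · B_N M²`.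
-/

open Finset

/-- The generalized binomial coefficient `A_k^{α+1} = Γ(k+α+2)/(Γ(k+1)Γ(α+2))`. -/
noncomputable def binomA (α : ℝ) (k : ℕ) : ℝ :=
  Real.Gamma ((k : ℝ) + α + 2) / (Real.Gamma ((k : ℝ) + 1) * Real.Gamma (α + 2))

/-- The (descending) forward difference operator `Δm_k = m_k − m_{k+1}`. -/
def fdiff (m : ℕ → ℂ) : ℕ → ℂ := fun k => m k - m (k + 1)

/-- `A_k^α = Γ(k+α+1)/(Γ(k+1)Γ(α+1))`, written as a finite product. -/
noncomputable def binomB (α : ℝ) (k : ℕ) : ℝ :=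
  ∏ j ∈ range k, (((j : ℝ) + α + 1) / ((j : ℝ) + 1))

section binomB

variable {α : ℝ}

lemma binomB_zero : binomB α 0 = 1 :=
  prod_range_zero _

lemma binomB_succ (k : ℕ) :
    binomB α (k + 1) = binomB α k * (((k : ℝ) + α + 1) / ((k : ℝ) + 1)) :=
  prod_range_succ _ _

lemma binomB_pos (hα : -1 < α) (k : ℕ) : 0 < binomB α k :=
  prod_pos fun j _ => div_pos (by linarith [j.cast_nonneg (α := ℝ)]) (by positivity)

lemma binomB_monotone (hα : 0 ≤ α) : Monotone (binomB α) := by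
  refine monotone_nat_of_le_succ fun k => ?_
  rw [binomB_succ]
  refine le_mul_of_one_le_right (binomB_pos (by linarith) k).le ?_
  rw [le_div_iff₀ (by positivity)]
  linarith

lemma binomB_mul_pow_le (hα : 0 ≤ α) {n N : ℕ} (h : n ≤ N) :
    binomB α n * (1 + α / N) ^ (N - n) ≤ binomB α N := by
  rw [binomB, binomB, ← prod_range_mul_prod_Ico _ h, ← Nat.card_Ico, ← prod_const]
  refine mul_le_mul_of_nonneg_left (prod_le_prod (fun _ _ => by positivity) fun j hj => ?_)
    (binomB_pos (by linarith) n).le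
  have hjN : (j : ℝ) + 1 ≤ N := by exact_mod_cast (mem_Ico.mp hj).2
  rw [show ((j : ℝ) + α + 1) / ((j : ℝ) + 1) = 1 + α / ((j : ℝ) + 1) by field_simp; ring]
  gcongr

lemma binomB_half_mul_le (hα : 0 ≤ α) {N : ℕ} (hN : 0 < N) :
    (1 + α / 2) * binomB α (N / 2) ≤ binomB α N := by
  have hB := (binomB_pos (by linarith) (N / 2)).le
  have hcount : (N : ℝ) ≤ 2 * ((N - N / 2 : ℕ) : ℝ) := by exact_mod_cast (by omega)
  have hNpos : (0 : ℝ) < N := by exact_mod_cast hN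
  calc (1 + α / 2) * binomB α (N / 2)
      ≤ (1 + ((N - N / 2 : ℕ) : ℝ) * (α / N)) * binomB α (N / 2) := by
        gcongr
        rw [← mul_div_assoc, le_div_iff₀ hNpos]
        nlinarith
    _ ≤ (1 + α / N) ^ (N - N / 2) * binomB α (N / 2) := by
        gcongr
        exact one_add_mul_le_pow (by linarith [div_nonneg hα hNpos.le]) _
    _ ≤ binomB α N := by
        rw [mul_comm]
        exact binomB_mul_pow_le hα (Nat.div_le_self N 2)

lemma binomB_half_add_le (hα : 0 < α) {N : ℕ} (hN : 0 < N) :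
    (α + 2) / α * binomB α (N / 2) + binomB α N ≤ (α + 2) / α * binomB α N := by
  have hhalf : (α + 2) / α * binomB α (N / 2) ≤ 2 / α * binomB α N :=
    calc (α + 2) / α * binomB α (N / 2) = 2 / α * ((1 + α / 2) * binomB α (N / 2)) := by
          field_simp; ring
      _ ≤ 2 / α * binomB α N :=
          mul_le_mul_of_nonneg_left (binomB_half_mul_le hα.le hN) (by positivity)
  have hsplit : (α + 2) / α * binomB α N = 2 / α * binomB α N + binomB α N := by
    field_simp; ring
  linarith

end binomB

section binomA

variable {α : ℝ}

lemma binomA_zero (hα : -1 < α) : binomA α 0 = 1 := by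
  have : Real.Gamma (α + 2) ≠ 0 := (Real.Gamma_pos_of_pos (by linarith)).ne'
  simp [binomA, this]

lemma binomA_succ (hα : -1 < α) (k : ℕ) :
    binomA α (k + 1) = binomA α k * (((k : ℝ) + α + 2) / ((k : ℝ) + 1)) := by
  have hk : (k : ℝ) + 1 ≠ 0 := by positivity
  have hka : (k : ℝ) + α + 2 ≠ 0 := by linarith [k.cast_nonneg (α := ℝ)]
  have hΓk := (Real.Gamma_pos_of_pos (by positivity : (0 : ℝ) < k + 1)).ne'
  have hΓα := (Real.Gamma_pos_of_pos (by linarith : 0 < α + 2)).ne'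
  simp only [binomA, Nat.cast_succ]
  rw [show (k : ℝ) + 1 + α + 2 = (k + α + 2) + 1 by ring, Real.Gamma_add_one hka,
    Real.Gamma_add_one hk]
  field_simp

lemma binomA_eq_binomB_mul (hα : -1 < α) (k : ℕ) :
    binomA α k = binomB α k * (((k : ℝ) + α + 1) / (α + 1)) := by
  have hα1 : α + 1 ≠ 0 := by linarith
  induction k with
  | zero => simp [binomA_zero hα, binomB, hα1]
  | succ k ih =>
    have hk : (k : ℝ) + 1 ≠ 0 := by positivity
    rw [binomA_succ hα, ih, binomB_succ]
    push_cast
    field_simp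
    ring

lemma binomA_pos (hα : -1 < α) (k : ℕ) : 0 < binomA α k := by
  rw [binomA_eq_binomB_mul hα]
  exact mul_pos (binomB_pos hα k) (div_pos (by linarith [k.cast_nonneg (α := ℝ)]) (by linarith))

lemma binomA_le_binomB_mul (hα : 0 ≤ α) {k N : ℕ} (h : k ≤ N) :
    binomA α k ≤ binomB α N * ((k : ℝ) + 1) := by
  rw [binomA_eq_binomB_mul (by linarith)]
  refine mul_le_mul (binomB_monotone hα h) ?_ (by positivity) (binomB_pos (by linarith) N).le
  rw [div_le_iff₀ (by linarith)]
  nlinarith [k.cast_nonneg (α := ℝ)]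

lemma inv_binomA_eq (hα : -1 < α) (hα0 : α ≠ 0) (k : ℕ) :
    (binomA α k)⁻¹ = (α + 1) / α * ((binomB α k)⁻¹ - (binomB α (k + 1))⁻¹) := by
  have hB := (binomB_pos hα k).ne'
  have hk : (k : ℝ) + 1 ≠ 0 := by positivity
  have hka : (k : ℝ) + α + 1 ≠ 0 := by linarith [k.cast_nonneg (α := ℝ)]
  rw [binomA_eq_binomB_mul hα, binomB_succ]
  field_simp
  ring

lemma sum_range_inv_binomA_add (hα : -1 < α) (hα0 : α ≠ 0) (N n : ℕ) :
    ∑ k ∈ range n, (binomA α (k + N))⁻¹ =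
      (α + 1) / α * ((binomB α N)⁻¹ - (binomB α (n + N))⁻¹) := by
  simp_rw [inv_binomA_eq hα hα0, ← mul_sum, add_right_comm _ N 1]
  rw [sum_range_sub' (fun k => (binomB α (k + N))⁻¹), zero_add]

lemma tsum_inv_binomA_add_le (hα : 0 < α) (N : ℕ) :
    ∑' k : ℕ, (binomA α (k + N))⁻¹ ≤ (α + 1) / α * (binomB α N)⁻¹ := by
  refine Real.tsum_le_of_sum_range_le (fun k => (inv_pos.mpr (binomA_pos (by linarith) _)).le)
    fun n => ?_
  rw [sum_range_inv_binomA_add (by linarith) hα.ne']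
  have := (inv_pos.mpr (binomB_pos (by linarith : -1 < α) (n + N))).le
  gcongr
  linarith

end binomA

section WeightedSum

variable {α K : ℝ} {a : ℕ → ℝ}

lemma sum_Ico_half_binomA_mul_le (hα : 0 ≤ α) (ha : ∀ k, 0 ≤ a k)
    (hK : ∀ P : ℕ, ∑ k ∈ Icc P (2 * P), ((k : ℝ) + 1) * a k ≤ K) (N : ℕ) :
    ∑ k ∈ Ico (N / 2 + 1) (N + 1), binomA α k * a k ≤ binomB α N * K := by
  calc ∑ k ∈ Ico (N / 2 + 1) (N + 1), binomA α k * a k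
      ≤ ∑ k ∈ Ico (N / 2 + 1) (N + 1), binomB α N * (((k : ℝ) + 1) * a k) :=
        sum_le_sum fun k hk => by
          rw [← mul_assoc]
          exact mul_le_mul_of_nonneg_right
            (binomA_le_binomB_mul hα (by have := (mem_Ico.mp hk).2; omega)) (ha k)
    _ ≤ binomB α N * ∑ k ∈ Icc (N / 2 + 1) (2 * (N / 2 + 1)), ((k : ℝ) + 1) * a k := by
        rw [← mul_sum]
        refine mul_le_mul_of_nonneg_left (sum_le_sum_of_subset_of_nonneg ?_ fun k _ _ => ?_)
          (binomB_pos (by linarith) N).le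
        · intro k hk
          simp only [mem_Ico, mem_Icc] at hk ⊢
          omega
        · exact mul_nonneg (by positivity) (ha k)
    _ ≤ binomB α N * K :=
        mul_le_mul_of_nonneg_left (hK _) (binomB_pos (by linarith) N).le

lemma sum_range_binomA_mul_le (hα : 0 < α) (ha : ∀ k, 0 ≤ a k)
    (hK : ∀ P : ℕ, ∑ k ∈ Icc P (2 * P), ((k : ℝ) + 1) * a k ≤ K) (N : ℕ) :
    ∑ k ∈ range (N + 1), binomA α k * a k ≤ (α + 2) / α * binomB α N * K := by
  have hK0 : 0 ≤ K := (ha 0).trans (by simpa using hK 0)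
  induction N using Nat.strong_induction_on with
  | _ N ih =>
    rcases Nat.eq_zero_or_pos N with rfl | hN
    · have hC : 1 ≤ (α + 2) / α := by rw [le_div_iff₀ hα]; linarith
      rw [zero_add, sum_range_one, binomA_zero (by linarith), binomB_zero, one_mul, mul_one]
      calc a 0 ≤ K := by simpa using hK 0
        _ ≤ (α + 2) / α * K := le_mul_of_one_le_left hK0 hC
    · rw [← sum_range_add_sum_Ico _ (by omega : N / 2 + 1 ≤ N + 1)]
      calc ∑ k ∈ range (N / 2 + 1), binomA α k * a k
            + ∑ k ∈ Ico (N / 2 + 1) (N + 1), binomA α k * a k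
          ≤ (α + 2) / α * binomB α (N / 2) * K + binomB α N * K :=
            add_le_add (ih _ (Nat.div_lt_self hN one_lt_two))
              (sum_Ico_half_binomA_mul_le hα.le ha hK N)
        _ ≤ (α + 2) / α * binomB α N * K := by
            rw [← add_mul]
            exact mul_le_mul_of_nonneg_right (binomB_half_add_le hα hN) hK0

end WeightedSum

theorem wbv_step_estimate (α : ℝ) (hα : 0 < α) :
    ∃ C : ℝ, 0 < C ∧ ∀ (m : ℕ → ℂ) (M : ℝ),
      (∀ k : ℕ, ‖m k‖ ≤ M) →
      (∀ N : ℕ, ∑ k ∈ Finset.Icc N (2 * N),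
          (((k : ℝ) + 1) * ‖fdiff m k‖) ^ 2 / ((k : ℝ) + 1) ≤ M ^ 2) →
      ∀ N : ℕ,
        (∑ k ∈ Finset.range (N + 1), binomA α k * ‖fdiff m k‖ ^ 2) *
            (∑' k : ℕ, (binomA α (k + N))⁻¹)
          ≤ C * M ^ 2 := by
  refine ⟨(α + 2) / α * ((α + 1) / α), by positivity, fun m M _ hblock N => ?_⟩
  have hK : ∀ P : ℕ, ∑ k ∈ Icc P (2 * P), ((k : ℝ) + 1) * ‖fdiff m k‖ ^ 2 ≤ M ^ 2 := by
    intro P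
    convert hblock P using 2 with k
    field_simp
  have hB := binomB_pos (by linarith : -1 < α) N
  calc (∑ k ∈ range (N + 1), binomA α k * ‖fdiff m k‖ ^ 2) *
          (∑' k : ℕ, (binomA α (k + N))⁻¹)
      ≤ ((α + 2) / α * binomB α N * M ^ 2) * ((α + 1) / α * (binomB α N)⁻¹) :=
        mul_le_mul (sum_range_binomA_mul_le hα (fun _ => sq_nonneg _) hK N)
          (tsum_inv_binomA_add_le hα N)
          (tsum_nonneg fun k => (inv_pos.mpr (binomA_pos (by linarith) _)).le)
          (by positivity)
    _ = (α + 2) / α * ((α + 1) / α) * M ^ 2 := by field_simp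
end

section
/- Fractional-difference/parameter-shift formula for Laguerre coefficients: let α > −1, λ ≥ 0, and let f be a polynomial. Define f̂_α(n) = ∫_0^∞ f(x) (L_n^α(x)/L_n^α(0)) x^α e^{−x} dx and the fractional difference Δ^λ m_k = ∑_{j=0}^∞ A_j^{−λ−1} m_{k+j} with A_j^{−λ−1} = binom(j−λ−1, j). Then Δ^λ f̂_α(k) = C_{α,λ} · f̂_{α+λ}(k) for every k, where C_{α,λ} = Γ(α+1)/Γ(α+λ+1). -/
open Finset MeasureTheory

/-- The Fourier–Laguerre coefficient `f̂_α(n) = ∫_0^∞ f(x) R_n^α(x) x^α e^{−x} dx`. -/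
noncomputable def lagCoeff (α : ℝ) (f : Polynomial ℝ) (n : ℕ) : ℝ :=
  ∫ x in Set.Ioi (0 : ℝ),
    f.eval x * (laguerre α n x / laguerre α n 0) * x ^ α * Real.exp (-x)

/-- The generalized binomial coefficient `A_j^δ = binom(j+δ, j) = ∏_{i=1}^j (δ+i)/i`. -/
noncomputable def binomGen (δ : ℝ) (j : ℕ) : ℝ :=
  ∏ i ∈ Finset.range j, (δ + (i : ℝ) + 1) / ((i : ℝ) + 1)

open Polynomial

/-!
By linearity in `f` it suffices to take `f = X ^ m`. Expanding `L_n^α` and integrating termwise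
against `x^α e^{-x}` (each term is a Gamma integral) expresses `f̂_α(n)` through the `n`-th forward
difference of the falling factorial `t ↦ t^{(m)}`, which gives
`f̂_α(n) = (-1)^n m^{(n)} Γ(α+1) (α+m)^{(m-n)}`. In particular `f̂_α(n) = 0` for `n > m`, so the
series is a finite sum, and since `A_j^{-λ-1} = (-1)^j λ^{(j)} / j!` that sum collapses, by the
Chu–Vandermonde identity for falling factorials, to `(α+λ+m)^{(m-k)}`.
-/

theorem descPochhammer_int_smeval_eq_eval {R : Type*} [Ring R] (n : ℕ) (r : R) :
    (descPochhammer ℤ n).smeval r = (descPochhammer R n).eval r := by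
  rw [Polynomial.descPochhammer_smeval_eq_ascPochhammer, ascPochhammer_smeval_eq_eval,
    descPochhammer_eval_eq_ascPochhammer]

section Pochhammer

variable {R : Type*} [CommRing R]

theorem descPochhammer_eval_add_one_sub (m : ℕ) (t : R) :
    (descPochhammer R (m + 1)).eval (t + 1) - (descPochhammer R (m + 1)).eval t =
      (m + 1) * (descPochhammer R m).eval t := by
  have hshift :
      (descPochhammer R (m + 1)).eval (t + 1) = (t + 1) * (descPochhammer R m).eval t := by
    simp [descPochhammer_succ_left]
  rw [hshift, descPochhammer_succ_eval]
  ring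

theorem fwdDiff_iter_descPochhammer_eval (m n : ℕ) :
    (fwdDiff 1)^[n] (fun t : R => (descPochhammer R m).eval t) =
      fun t => m.descFactorial n * (descPochhammer R (m - n)).eval t := by
  induction n generalizing m with
  | zero => simp
  | succ n ih =>
    cases m with
    | zero =>
      simpa using Function.iterate_fixed (fwdDiff_const (1 : R) (0 : R)) n
    | succ m =>
      have hdiff : fwdDiff 1 (fun t : R => (descPochhammer R (m + 1)).eval t) =
          ((m + 1 : ℕ) : R) • fun t => (descPochhammer R m).eval t := by
        ext t
        simpa [fwdDiff] using descPochhammer_eval_add_one_sub m t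
      rw [Function.iterate_succ_apply, hdiff, fwdDiff_iter_const_smul, ih]
      ext t
      rw [Nat.succ_descFactorial_succ]
      simp [mul_assoc]

theorem sum_neg_one_pow_mul_choose_mul_descPochhammer_eval (m n : ℕ) (t : R) :
    ∑ j ∈ range (n + 1), (-1) ^ j * n.choose j * (descPochhammer R m).eval (t + j) =
      (-1) ^ n * m.descFactorial n * (descPochhammer R (m - n)).eval t := by
  have h := congrFun (fwdDiff_iter_descPochhammer_eval (R := R) m n) t
  rw [fwdDiff_iter_eq_sum_shift] at h
  rw [mul_assoc, ← h, mul_sum]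
  refine sum_congr rfl fun j hj => ?_
  have hsq : ((-1 : R) ^ (n - j)) ^ 2 = 1 := by
    rw [← pow_mul, mul_comm, pow_mul, neg_one_sq, one_pow]
  rw [← pow_sub_mul_pow (-1 : R) (Nat.le_of_lt_succ (mem_range.1 hj))]
  simp only [zsmul_eq_mul, nsmul_eq_mul, mul_one]
  push_cast
  linear_combination -(-1) ^ j * n.choose j * (descPochhammer R m).eval (t + j) * hsq

theorem descPochhammer_eval_add (N : ℕ) (r s : R) :
    (descPochhammer R N).eval (r + s) = ∑ j ∈ range (N + 1),
      N.choose j * ((descPochhammer R j).eval r * (descPochhammer R (N - j)).eval s) := by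
  simp only [← descPochhammer_int_smeval_eq_eval,
    Ring.descPochhammer_smeval_add N (Commute.all r s), Nat.sum_antidiagonal_eq_sum_range_succ_mk]

end Pochhammer

theorem Real.Gamma_add_nat_eq_mul_ascPochhammer {s : ℝ} (hs : ∀ k : ℕ, s ≠ -k) (n : ℕ) :
    Real.Gamma (s + n) = Real.Gamma s * (ascPochhammer ℝ n).eval s := by
  induction n with
  | zero => simp
  | succ n ih =>
    have hsn : s + n ≠ 0 := fun h => hs n (eq_neg_of_add_eq_zero_left h)
    rw [Nat.cast_succ, ← add_assoc, Real.Gamma_add_one hsn, ih, ascPochhammer_succ_eval]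
    ring

theorem integrableOn_rpow_mul_exp_neg {s : ℝ} (hs : -1 < s) :
    IntegrableOn (fun x : ℝ => x ^ s * Real.exp (-x)) (Set.Ioi 0) := by
  simpa using integrableOn_rpow_mul_exp_neg_rpow hs one_pos

theorem integral_rpow_mul_exp_neg {s : ℝ} (hs : -1 < s) :
    ∫ x in Set.Ioi (0 : ℝ), x ^ s * Real.exp (-x) = Real.Gamma (s + 1) := by
  simpa using integral_rpow_mul_exp_neg_rpow one_pos hs

noncomputable def gammaMoment (α : ℝ) : ℝ[X] →ₗ[ℝ] ℝ :=
  lsum fun i => Real.Gamma (α + i + 1) • LinearMap.id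

theorem gammaMoment_monomial (α : ℝ) (i : ℕ) (a : ℝ) :
    gammaMoment α (monomial i a) = a * Real.Gamma (α + i + 1) := by
  simp [gammaMoment, mul_comm]

theorem eval_monomial_mul_rpow_mul_exp_neg (α : ℝ) {x : ℝ} (hx : 0 < x) (i : ℕ) (a : ℝ) :
    (monomial i a).eval x * x ^ α * Real.exp (-x) = a * (x ^ (α + i) * Real.exp (-x)) := by
  rw [eval_monomial, Real.rpow_add hx, Real.rpow_natCast]
  ring

section
variable {α : ℝ} (hα : -1 < α)
include hα

theorem integrableOn_eval_mul_rpow_mul_exp_neg (p : ℝ[X]) :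
    IntegrableOn (fun x => p.eval x * x ^ α * Real.exp (-x)) (Set.Ioi 0) := by
  induction p using Polynomial.induction_on' with
  | add p q hp hq =>
    simp only [eval_add, add_mul]
    exact hp.add hq
  | monomial i a =>
    have hi : -1 < α + i := by linarith [i.cast_nonneg (α := ℝ)]
    exact IntegrableOn.congr_fun ((integrableOn_rpow_mul_exp_neg hi).const_mul a)
      (fun x hx => (eval_monomial_mul_rpow_mul_exp_neg α hx i a).symm) measurableSet_Ioi

theorem integral_eval_mul_rpow_mul_exp_neg (p : ℝ[X]) :
    ∫ x in Set.Ioi (0 : ℝ), p.eval x * x ^ α * Real.exp (-x) = gammaMoment α p := by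
  induction p using Polynomial.induction_on' with
  | add p q hp hq =>
    simp only [eval_add, add_mul, map_add]
    rw [integral_add (integrableOn_eval_mul_rpow_mul_exp_neg hα p)
      (integrableOn_eval_mul_rpow_mul_exp_neg hα q), hp, hq]
  | monomial i a =>
    have hi : -1 < α + i := by linarith [i.cast_nonneg (α := ℝ)]
    rw [setIntegral_congr_fun measurableSet_Ioi
      (fun x hx => eval_monomial_mul_rpow_mul_exp_neg α hx i a), integral_const_mul,
      integral_rpow_mul_exp_neg hi, gammaMoment_monomial]

end

noncomputable def laguerrePoly (α : ℝ) (n : ℕ) : ℝ[X] :=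
  ∑ j ∈ range (n + 1), monomial j (Real.Gamma ((n : ℝ) + α + 1) /
      (Real.Gamma (α + (j : ℝ) + 1) * ((n - j).factorial : ℝ)) * (-1) ^ j / (j.factorial : ℝ))

theorem eval_laguerrePoly (α : ℝ) (n : ℕ) (x : ℝ) :
    (laguerrePoly α n).eval x = laguerre α n x := by
  simp only [laguerrePoly, laguerre, eval_finsetSum, eval_monomial, neg_pow x]
  refine sum_congr rfl fun j _ => by ring

theorem laguerre_zero (α : ℝ) (n : ℕ) :
    laguerre α n 0 = Real.Gamma ((n : ℝ) + α + 1) / (Real.Gamma (α + 1) * (n.factorial : ℝ)) := by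
  rw [laguerre, sum_eq_single_of_mem 0 (by simp) fun j _ hj => by simp [hj]]
  simp

section
variable {α : ℝ} (hα : -1 < α)
include hα

theorem lagCoeff_eq_gammaMoment (f : ℝ[X]) (n : ℕ) :
    lagCoeff α f n = gammaMoment α (f * laguerrePoly α n) / laguerre α n 0 := by
  rw [← integral_eval_mul_rpow_mul_exp_neg hα, ← integral_div, lagCoeff]
  refine setIntegral_congr_fun measurableSet_Ioi fun x _ => ?_
  rw [eval_mul, eval_laguerrePoly]
  ring

theorem lagCoeff_add (f g : ℝ[X]) (n : ℕ) :
    lagCoeff α (f + g) n = lagCoeff α f n + lagCoeff α g n := by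
  simp only [lagCoeff_eq_gammaMoment hα, add_mul, map_add, add_div]

theorem lagCoeff_smul (a : ℝ) (f : ℝ[X]) (n : ℕ) :
    lagCoeff α (a • f) n = a * lagCoeff α f n := by
  simp only [lagCoeff_eq_gammaMoment hα, smul_mul_assoc, map_smul, smul_eq_mul, mul_div_assoc]

theorem gammaMoment_X_pow_mul_laguerrePoly (m n : ℕ) :
    gammaMoment α (X ^ m * laguerrePoly α n) = Real.Gamma ((n : ℝ) + α + 1) / n.factorial *
      ∑ j ∈ range (n + 1), (-1) ^ j * n.choose j * (descPochhammer ℝ m).eval (α + m + j) := by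
  simp only [laguerrePoly, mul_sum, X_pow_mul_monomial, map_sum, gammaMoment_monomial]
  refine sum_congr rfl fun j hj => ?_
  have hj : j ≤ n := Nat.le_of_lt_succ (mem_range.1 hj)
  have hpos : 0 < α + j + 1 := by linarith [j.cast_nonneg (α := ℝ)]
  have hGamma : Real.Gamma (α + (j + m : ℕ) + 1) =
      Real.Gamma (α + j + 1) * (descPochhammer ℝ m).eval (α + m + j) := by
    have hs : ∀ k : ℕ, α + j + 1 ≠ -k := fun k => ((neg_nonpos.2 k.cast_nonneg).trans_lt hpos).ne'
    rw [descPochhammer_eval_eq_ascPochhammer, show α + m + j - m + 1 = α + j + 1 by ring,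
      ← Real.Gamma_add_nat_eq_mul_ascPochhammer hs]
    push_cast
    ring_nf
  have hfact : (n.factorial : ℝ) = n.choose j * j.factorial * (n - j).factorial := by
    exact_mod_cast (Nat.choose_mul_factorial_mul_factorial hj).symm
  rw [hGamma, hfact]
  have hΓ := (Real.Gamma_pos_of_pos hpos).ne'
  have hchoose : (n.choose j : ℝ) ≠ 0 := by exact_mod_cast (Nat.choose_pos hj).ne'
  field_simp

theorem lagCoeff_X_pow (m n : ℕ) :
    lagCoeff α (X ^ m) n =
      (-1) ^ n * m.descFactorial n * Real.Gamma (α + 1) * (descPochhammer ℝ (m - n)).eval (α + m) := by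
  rw [lagCoeff_eq_gammaMoment hα, gammaMoment_X_pow_mul_laguerrePoly hα,
    sum_neg_one_pow_mul_choose_mul_descPochhammer_eval, laguerre_zero]
  have hΓn := (Real.Gamma_pos_of_pos (show 0 < (n : ℝ) + α + 1 by
    linarith [n.cast_nonneg (α := ℝ)])).ne'
  have hΓ := (Real.Gamma_pos_of_pos (show 0 < α + 1 by linarith)).ne'
  field_simp

end

theorem binomGen_neg_sub_one (lam : ℝ) (j : ℕ) :
    binomGen (-lam - 1) j = (-1) ^ j * (descPochhammer ℝ j).eval lam / j.factorial := by
  have hfactor : ∀ i ∈ range j, (-lam - 1 + i + 1) / (i + 1) = -1 * ((lam - i) / (i + 1)) :=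
    fun i _ => by ring
  rw [binomGen, prod_congr rfl hfactor, prod_mul_distrib, prod_const, card_range, prod_div_distrib,
    descPochhammer_eval_eq_prod_range, ← prod_range_add_one_eq_factorial]
  push_cast
  ring

theorem sum_binomGen_mul_lagCoeff_X_pow {α lam : ℝ} (hα : -1 < α) (hαlam : -1 < α + lam)
    (k N : ℕ) :
    ∑ j ∈ range (N + 1), binomGen (-lam - 1) j * lagCoeff α (X ^ (k + N)) (k + j) =
      Real.Gamma (α + 1) / Real.Gamma (α + lam + 1) * lagCoeff (α + lam) (X ^ (k + N)) k := by
  have hterm : ∀ j ∈ range (N + 1), binomGen (-lam - 1) j * lagCoeff α (X ^ (k + N)) (k + j) =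
      (-1) ^ k * (k + N).descFactorial k * Real.Gamma (α + 1) * (N.choose j *
        ((descPochhammer ℝ j).eval lam * (descPochhammer ℝ (N - j)).eval (α + (k + N : ℕ)))) := by
    intro j _
    have hsq : ((-1 : ℝ) ^ j) ^ 2 = 1 := by
      rw [← pow_mul, mul_comm, pow_mul, neg_one_sq, one_pow]
    have hdesc :
        (k + N).descFactorial (k + j) = j.factorial * N.choose j * (k + N).descFactorial k := by
      rw [← Nat.descFactorial_mul_descFactorial (Nat.le_add_right k j), Nat.add_sub_cancel_left,
        Nat.add_sub_cancel_left, Nat.descFactorial_eq_factorial_mul_choose]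
    have hfact := j.factorial_ne_zero
    rw [binomGen_neg_sub_one, lagCoeff_X_pow hα, hdesc, Nat.add_sub_add_left, pow_add]
    push_cast
    field_simp
    rw [hsq, one_mul]
  have hΓ := (Real.Gamma_pos_of_pos (show 0 < α + lam + 1 by linarith)).ne'
  rw [sum_congr rfl hterm, ← mul_sum, ← descPochhammer_eval_add, lagCoeff_X_pow hαlam,
    Nat.add_sub_cancel_left]
  field_simp
  push_cast
  ring_nf

theorem hasSum_binomGen_mul_lagCoeff_X_pow {α lam : ℝ} (hα : -1 < α) (hαlam : -1 < α + lam)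
    (m k : ℕ) :
    HasSum (fun j => binomGen (-lam - 1) j * lagCoeff α (X ^ m) (k + j))
      (Real.Gamma (α + 1) / Real.Gamma (α + lam + 1) * lagCoeff (α + lam) (X ^ m) k) := by
  rcases le_or_gt k m with hkm | hmk
  · obtain ⟨N, rfl⟩ := Nat.exists_eq_add_of_le hkm
    rw [← sum_binomGen_mul_lagCoeff_X_pow hα hαlam k N]
    refine hasSum_sum_of_ne_finset_zero fun j hj => ?_
    have hlt : k + N < k + j := by simpa using hj
    simp [lagCoeff_X_pow hα, Nat.descFactorial_eq_zero_iff_lt.2 hlt]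
  · simp [lagCoeff_X_pow, hα, hαlam, Nat.descFactorial_eq_zero_iff_lt.2 hmk,
      Nat.descFactorial_eq_zero_iff_lt.2 (hmk.trans_le (Nat.le_add_right k _))]

theorem hasSum_binomGen_mul_lagCoeff {α lam : ℝ} (hα : -1 < α) (hαlam : -1 < α + lam)
    (f : ℝ[X]) (k : ℕ) :
    HasSum (fun j => binomGen (-lam - 1) j * lagCoeff α f (k + j))
      (Real.Gamma (α + 1) / Real.Gamma (α + lam + 1) * lagCoeff (α + lam) f k) := by
  induction f using Polynomial.induction_on' with
  | add p q hp hq => simpa only [lagCoeff_add hα, lagCoeff_add hαlam, mul_add] using hp.add hq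
  | monomial m a =>
    simpa only [← smul_X_eq_monomial, lagCoeff_smul hα, lagCoeff_smul hαlam, mul_left_comm]
      using (hasSum_binomGen_mul_lagCoeff_X_pow hα hαlam m k).mul_left a

theorem fractional_difference_shift (α lam : ℝ) (hα : -1 < α) (hlam : 0 ≤ lam)
    (f : Polynomial ℝ) (k : ℕ) :
    ∑' j : ℕ, binomGen (-lam - 1) j * lagCoeff α f (k + j) =
      (Real.Gamma (α + 1) / Real.Gamma (α + lam + 1)) * lagCoeff (α + lam) f k :=
  (hasSum_binomGen_mul_lagCoeff hα (by linarith) f k).tsum_eq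
end
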